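/- (Rule of Trace-0 Principal Minors) Let A and B be the z-matrix and w-matrix of a singular sequence, and let I ⊆ {1,…,n}. If a_{ii} = 0 for all i ∈ I, then Σ_{i∈I, j∉I} a_{ij} ≠ 1. The same statement holds with A replaced by B. -/

import Mathlib

open Filter Finset

/-- `Zq δ z k l` is the quantity `Z_{lk} = δ_{kl}^3 · (z_k − z_l)`
(and, applied to `w`, the quantity `W_{lk}`). -/
noncomputable def Zq {n : ℕ} (δ : Fin n → Fin n → ℂ) (z : Fin n → ℂ) (k l : Fin n) : ℂ :=
  δ k l ^ 3 * (z k - z l)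

/-- A singular sequence of normalized central configurations for the masses `m`:
sequences `z^{(N)}, w^{(N)} ∈ ℂ^n`, symmetric `δ^{(N)}`, and positive reals `ε_N → 0`
such that every term satisfies the central configuration equations
`z_k = ∑_{l≠k} m_l Z_{lk}`, `w_k = ∑_{l≠k} m_l W_{lk}`, the normalization
`δ_{kl}^2 z_{kl} w_{kl} = 1` (`k ≠ l`), the maximum of the `|z_k|, |Z_{kl}|`
(resp. `|w_k|, |W_{kl}|`) equals `ε_N^{-2}`, and all the sequences
`ε_N^2 z_k, ε_N^2 w_k, ε_N^2 Z_{kl}, ε_N^2 W_{kl}` converge. -/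
structure SingularSeq (n : ℕ) (m : Fin n → ℂ) : Type where
  z : ℕ → Fin n → ℂ
  w : ℕ → Fin n → ℂ
  delta : ℕ → Fin n → Fin n → ℂ
  eps : ℕ → ℝ
  eps_pos : ∀ N, 0 < eps N
  eps_lim : Tendsto eps atTop (nhds 0)
  delta_symm : ∀ N, ∀ k l : Fin n, delta N k l = delta N l k
  eq_z : ∀ N, ∀ k : Fin n, z N k = ∑ l ∈ univ.erase k, m l * Zq (delta N) (z N) k l
  eq_w : ∀ N, ∀ k : Fin n, w N k = ∑ l ∈ univ.erase k, m l * Zq (delta N) (w N) k l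
  normalize : ∀ N, ∀ k l : Fin n, k ≠ l →
    delta N k l ^ 2 * (z N l - z N k) * (w N l - w N k) = 1
  maxZ : ∀ N, IsGreatest
      ({x : ℝ | ∃ k, x = ‖z N k‖} ∪
        {x : ℝ | ∃ k l, k ≠ l ∧ x = ‖Zq (delta N) (z N) k l‖})
      (eps N ^ (-2 : ℤ))
  maxW : ∀ N, IsGreatest
      ({x : ℝ | ∃ k, x = ‖w N k‖} ∪
        {x : ℝ | ∃ k l, k ≠ l ∧ x = ‖Zq (delta N) (w N) k l‖})
      (eps N ^ (-2 : ℤ))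
  conv_z : ∀ k : Fin n, ∃ L : ℂ,
    Tendsto (fun N => (eps N : ℂ) ^ 2 * z N k) atTop (nhds L)
  conv_w : ∀ k : Fin n, ∃ L : ℂ,
    Tendsto (fun N => (eps N : ℂ) ^ 2 * w N k) atTop (nhds L)
  conv_Z : ∀ k l : Fin n, k ≠ l → ∃ L : ℂ,
    Tendsto (fun N => (eps N : ℂ) ^ 2 * Zq (delta N) (z N) k l) atTop (nhds L)
  conv_W : ∀ k l : Fin n, k ≠ l → ∃ L : ℂ,
    Tendsto (fun N => (eps N : ℂ) ^ 2 * Zq (delta N) (w N) k l) atTop (nhds L)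

/-- `A` and `B` are the z-matrix and the w-matrix of the singular sequence `S`:
symmetric `{0,1}`-matrices whose entries record which of the (convergent) sequences
`ε_N^2 z_i`, `ε_N^2 Z_{ij}` (resp. `ε_N^2 w_i`, `ε_N^2 W_{ij}`) have nonzero limit. -/
structure IsZWMatrices {n : ℕ} {m : Fin n → ℂ} (S : SingularSeq n m)
    (A B : Matrix (Fin n) (Fin n) ℕ) : Prop where
  zeroOne_A : ∀ i j, A i j = 0 ∨ A i j = 1
  symm_A : ∀ i j, A i j = A j i
  zeroOne_B : ∀ i j, B i j = 0 ∨ B i j = 1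
  symm_B : ∀ i j, B i j = B j i
  diag_A : ∀ i, A i i = 1 ↔
    ¬ Tendsto (fun N => (S.eps N : ℂ) ^ 2 * S.z N i) atTop (nhds 0)
  off_A : ∀ i j, i ≠ j → (A i j = 1 ↔
    ¬ Tendsto (fun N => (S.eps N : ℂ) ^ 2 * Zq (S.delta N) (S.z N) i j) atTop (nhds 0))
  diag_B : ∀ i, B i i = 1 ↔
    ¬ Tendsto (fun N => (S.eps N : ℂ) ^ 2 * S.w N i) atTop (nhds 0)
  off_B : ∀ i j, i ≠ j → (B i j = 1 ↔
    ¬ Tendsto (fun N => (S.eps N : ℂ) ^ 2 * Zq (S.delta N) (S.w N) i j) atTop (nhds 0))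


/-!
Multiplying the central configuration equation `z_k = ∑_{l ≠ k} m_l Z_{lk}` by `m_k` and summing
over `k ∈ I`, the terms with both indices in `I` cancel because `Z` is antisymmetric, so
`∑_{k ∈ I} m_k z_k = ∑_{k ∈ I, l ∉ I} m_k m_l Z_{lk}`. Scale by `ε²` and let `N → ∞`. If
`a_{kk} = 0` on `I`, the left side tends to `0`. If exactly one `a_{kl}` with `k ∈ I`, `l ∉ I`
equals `1`, the right side tends to `m_k m_l L` with `L ≠ 0`, and the masses are nonzero
(take singletons in the mass hypothesis): a contradiction. The statement for `B` follows by
exchanging `z` and `w`.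
-/

open Filter Finset Topology

theorem Finset.sum_sum_erase_eq_zero_of_antisymm {ι M : Type*} [DecidableEq ι] [AddCommGroup M]
    {g : ι → ι → M} (hg : ∀ k l, g l k = -g k l) (s : Finset ι) :
    ∑ k ∈ s, ∑ l ∈ s.erase k, g k l = 0 := by
  rw [sum_sigma']
  refine sum_involution (fun x _ => ⟨x.2, x.1⟩) (fun x _ => by rw [hg x.1 x.2, add_neg_cancel])
    (fun x hx _ h => ?_) (fun x hx => ?_) (fun x _ => rfl)
  · simp only [mem_sigma, mem_erase] at hx
    exact hx.2.1 (congrArg Sigma.fst h)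
  · simp only [mem_sigma, mem_erase] at hx ⊢
    exact ⟨hx.2.2, hx.2.1.symm, hx.1⟩

theorem Finset.exists_eq_one_of_sum_eq_one {α : Type*} {s : Finset α} {f : α → ℕ}
    (h : ∑ a ∈ s, f a = 1) : ∃ a ∈ s, f a = 1 ∧ ∀ b ∈ s, b ≠ a → f b = 0 := by
  classical
  obtain ⟨a, ha, hfa⟩ := exists_ne_zero_of_sum_ne_zero (h ▸ one_ne_zero)
  have hsplit := add_sum_erase s f ha
  refine ⟨a, ha, by omega, fun b hb hba => ?_⟩
  exact sum_eq_zero_iff.mp (by omega) b (mem_erase.mpr ⟨hba, hb⟩)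

theorem tendsto_finsetSum_of_tendsto_zero_of_ne {ι α M : Type*} [TopologicalSpace M]
    [AddCommMonoid M] [ContinuousAdd M] {f : ι → α → M} {l : Filter α} {s : Finset ι} {a : ι}
    {x : M} (ha : a ∈ s) (hfa : Tendsto (f a) l (𝓝 x))
    (hf : ∀ b ∈ s, b ≠ a → Tendsto (f b) l (𝓝 0)) :
    Tendsto (fun t => ∑ b ∈ s, f b t) l (𝓝 x) := by
  classical
  have hlim := tendsto_finsetSum (a := fun b => if b = a then x else 0) s fun b hb => by
    split_ifs with hba
    · exact hba ▸ hfa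
    · exact hf b hb hba
  simpa [ha] using hlim

theorem sum_mul_eq_sum_product_compl {ι R : Type*} [Fintype ι] [DecidableEq ι] [CommRing R]
    {m z : ι → R} {Z : ι → ι → R} (hZ : ∀ k l, Z l k = -Z k l)
    (hz : ∀ k, z k = ∑ l ∈ univ.erase k, m l * Z k l) (I : Finset ι) :
    ∑ k ∈ I, m k * z k = ∑ p ∈ I ×ˢ Iᶜ, m p.1 * m p.2 * Z p.1 p.2 := by
  have hsplit : ∀ k ∈ I, m k * z k =
      ∑ l ∈ I.erase k, m k * m l * Z k l + ∑ l ∈ Iᶜ, m k * m l * Z k l := by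
    intro k hk
    have hin : (univ.erase k).filter (· ∈ I) = I.erase k := by ext; simp [and_comm]
    have hout : (univ.erase k).filter (· ∉ I) = Iᶜ := by
      ext l; simpa using fun (hl : l ∉ I) (hlk : l = k) => hl (hlk ▸ hk)
    simp only [mul_assoc]
    rw [hz, mul_sum, ← sum_filter_add_sum_filter_not _ (· ∈ I), hin, hout]
  rw [sum_congr rfl hsplit, sum_add_distrib, sum_product,
    sum_sum_erase_eq_zero_of_antisymm (fun k l => by rw [hZ]; ring), zero_add]

theorem Zq_swap {n : ℕ} {δ : Fin n → Fin n → ℂ} (hδ : ∀ k l, δ k l = δ l k) (z : Fin n → ℂ)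
    (k l : Fin n) : Zq δ z l k = -Zq δ z k l := by
  rw [Zq, Zq, hδ l k]
  ring

namespace SingularSeq

variable {n : ℕ} {m : Fin n → ℂ}

def swap (S : SingularSeq n m) : SingularSeq n m where
  z := S.w
  w := S.z
  delta := S.delta
  eps := S.eps
  eps_pos := S.eps_pos
  eps_lim := S.eps_lim
  delta_symm := S.delta_symm
  eq_z := S.eq_w
  eq_w := S.eq_z
  normalize N k l hkl := by rw [mul_right_comm]; exact S.normalize N k l hkl
  maxZ := S.maxW
  maxW := S.maxZ
  conv_z := S.conv_w
  conv_w := S.conv_z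
  conv_Z := S.conv_W
  conv_W := S.conv_Z

theorem sum_mul_eps_sq_z_eq (S : SingularSeq n m) (N : ℕ) (I : Finset (Fin n)) :
    ∑ k ∈ I, m k * ((S.eps N : ℂ) ^ 2 * S.z N k) =
      ∑ p ∈ I ×ˢ Iᶜ, m p.1 * m p.2 * ((S.eps N : ℂ) ^ 2 * Zq (S.delta N) (S.z N) p.1 p.2) := by
  refine sum_mul_eq_sum_product_compl (z := fun k => (S.eps N : ℂ) ^ 2 * S.z N k)
    (Z := fun k l => (S.eps N : ℂ) ^ 2 * Zq (S.delta N) (S.z N) k l) (fun k l => ?_) (fun k => ?_) I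
  · rw [Zq_swap (S.delta_symm N), mul_neg]
  · rw [S.eq_z, mul_sum]
    exact sum_congr rfl fun l _ => mul_left_comm _ _ _

end SingularSeq

namespace IsZWMatrices

variable {n : ℕ} {m : Fin n → ℂ} {S : SingularSeq n m} {A B : Matrix (Fin n) (Fin n) ℕ}

theorem swap (h : IsZWMatrices S A B) : IsZWMatrices S.swap B A :=
  ⟨h.zeroOne_B, h.symm_B, h.zeroOne_A, h.symm_A, h.diag_B, h.off_B, h.diag_A, h.off_A⟩

theorem tendsto_z_of_diag_eq_zero (h : IsZWMatrices S A B) {i : Fin n} (hi : A i i = 0) :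
    Tendsto (fun N => (S.eps N : ℂ) ^ 2 * S.z N i) atTop (𝓝 0) := by
  by_contra hlim
  have := (h.diag_A i).mpr hlim
  omega

theorem tendsto_Zq_of_eq_zero (h : IsZWMatrices S A B) {i j : Fin n} (hij : i ≠ j)
    (hA : A i j = 0) :
    Tendsto (fun N => (S.eps N : ℂ) ^ 2 * Zq (S.delta N) (S.z N) i j) atTop (𝓝 0) := by
  by_contra hlim
  have := (h.off_A i j hij).mpr hlim
  omega

theorem sum_compl_ne_one_of_diag_eq_zero (h : IsZWMatrices S A B) (hm : ∀ k, m k ≠ 0)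
    {I : Finset (Fin n)} (hI : ∀ i ∈ I, A i i = 0) :
    ∑ i ∈ I, ∑ j ∈ Iᶜ, A i j ≠ 1 := by
  intro hsum
  rw [← sum_product (f := fun p => A p.1 p.2)] at hsum
  obtain ⟨p, hp, hAp, hA0⟩ := exists_eq_one_of_sum_eq_one hsum
  have hcross : ∀ q ∈ I ×ˢ Iᶜ, q.1 ≠ q.2 := fun q hq =>
    ne_of_mem_of_not_mem (mem_product.mp hq).1 (mem_compl.mp (mem_product.mp hq).2)
  obtain ⟨L, hL⟩ := S.conv_Z p.1 p.2 (hcross p hp)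
  have hL0 : L ≠ 0 := by
    rintro rfl
    exact (h.off_A _ _ (hcross p hp)).mp hAp hL
  have hlhs : Tendsto (fun N => ∑ k ∈ I, m k * ((S.eps N : ℂ) ^ 2 * S.z N k)) atTop (𝓝 0) := by
    simpa using tendsto_finsetSum I fun k hk =>
      (h.tendsto_z_of_diag_eq_zero (hI k hk)).const_mul (m k)
  have hrhs := tendsto_finsetSum_of_tendsto_zero_of_ne hp (hL.const_mul (m p.1 * m p.2))
    fun q hq hqp => by
      simpa using (h.tendsto_Zq_of_eq_zero (hcross q hq) (hA0 q hq hqp)).const_mul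
        (m q.1 * m q.2)
  have hlim := hrhs.congr fun N => (S.sum_mul_eps_sq_z_eq N I).symm
  exact mul_ne_zero (mul_ne_zero (hm _) (hm _)) hL0 (tendsto_nhds_unique hlim hlhs)

end IsZWMatrices

theorem rule_of_trace_zero_principal_minors_general (n : ℕ) (m : Fin n → ℂ)
    (hm : ∀ I : Finset (Fin n), I.Nonempty → ∑ k ∈ I, m k ≠ 0)
    (S : SingularSeq n m) (A B : Matrix (Fin n) (Fin n) ℕ)
    (hAB : IsZWMatrices S A B) :
    ∀ I : Finset (Fin n),
      ((∀ i ∈ I, A i i = 0) → (∑ i ∈ I, ∑ j ∈ Iᶜ, A i j) ≠ 1) ∧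
      ((∀ i ∈ I, B i i = 0) → (∑ i ∈ I, ∑ j ∈ Iᶜ, B i j) ≠ 1) := by
  have hm' : ∀ k, m k ≠ 0 := fun k => by simpa using hm {k} (singleton_nonempty k)
  exact fun I => ⟨hAB.sum_compl_ne_one_of_diag_eq_zero hm',
    hAB.swap.sum_compl_ne_one_of_diag_eq_zero hm'⟩

theorem rule_of_trace_zero_principal_minors (n : ℕ) (hn : 2 ≤ n) (m : Fin n → ℂ)
    (hm : ∀ I : Finset (Fin n), I.Nonempty → ∑ k ∈ I, m k ≠ 0)
    (S : SingularSeq n m) (A B : Matrix (Fin n) (Fin n) ℕ)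
    (hAB : IsZWMatrices S A B) :
    ∀ I : Finset (Fin n),
      ((∀ i ∈ I, A i i = 0) → (∑ i ∈ I, ∑ j ∈ Iᶜ, A i j) ≠ 1) ∧
      ((∀ i ∈ I, B i i = 0) → (∑ i ∈ I, ∑ j ∈ Iᶜ, B i j) ≠ 1) :=
  rule_of_trace_zero_principal_minors_general n m hm S A B hAB
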